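/- The distance of f: F_2^n → {0,1} from the class of odd-cycle-free functions is exactly (1/2)(ρ + min_α f̂(α)), where ρ = E_x[f(x)] and the minimum is over all α ∈ F_2^n. -/

import Mathlib

open Finset
open scoped Classical

abbrev V (n : ℕ) : Type := Fin n → ZMod 2

def dotp {n : ℕ} (α x : V n) : ZMod 2 := ∑ i, α i * x i

def IsBool {n : ℕ} (f : V n → ℝ) : Prop := ∀ x, f x = 0 ∨ f x = 1

/-- `f` is odd-cycle-free: no odd `k` and `x_1,…,x_k` in the support summing to `0`. -/
def OCF {n : ℕ} (f : V n → ℝ) : Prop :=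
  ∀ k : ℕ, Odd k → ¬ ∃ x : Fin k → V n, (∀ i, f (x i) = 1) ∧ (∑ i, x i) = 0

noncomputable def fhat {n : ℕ} (f : V n → ℝ) (α : V n) : ℝ :=
  (∑ x : V n, f x * (-1 : ℝ) ^ (dotp α x).val) / 2 ^ n

/-- `f` is `ε`-far from odd-cycle-free: every Boolean OCF function differs from `f`
on at least `ε·2^n` points. -/
def FarFromOCF {n : ℕ} (ε : ℝ) (f : V n → ℝ) : Prop :=
  ∀ g : V n → ℝ, IsBool g → OCF g →
    ε * 2 ^ n ≤ ((Finset.univ.filter fun x => f x ≠ g x).card : ℝ)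

/-!
An odd-cycle-free set `S ⊆ 𝔽₂ⁿ` lies in an affine hyperplane `{x | α·x = 1}`: in `𝔽₂ⁿ × 𝔽₂` the
span of the vectors `(s, 1)`, `s ∈ S`, consists of the pairs (sum of a family in `S`, its length
mod 2), so it misses `(0, 1)`, and a functional vanishing on it with value `1` at `(0, 1)` gives `α`.
Conversely every subset of such a hyperplane is odd-cycle-free. Hence the nearest OCF function to
`f` deletes, for the best `α`, the support points with `α·x = 0`, and there are
`2ⁿ⁻¹ (f̂(0) + f̂(α))` of those, because `(1 + (-1)^{α·x}) / 2` is the indicator of `α·x = 0`.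
-/

theorem ZMod.eq_zero_or_eq_one (a : ZMod 2) : a = 0 ∨ a = 1 := by
  revert a
  decide

section OddSums

variable {M : Type*} [AddCommGroup M] [Module (ZMod 2) M]

theorem exists_family_of_mem_span_prod_one {S : Set M} {v : M × ZMod 2}
    (hv : v ∈ Submodule.span (ZMod 2) ((fun s => (s, (1 : ZMod 2))) '' S)) :
    ∃ k, ∃ x : Fin k → M, (∀ i, x i ∈ S) ∧ v = (∑ i, x i, (k : ZMod 2)) := by
  induction hv using Submodule.span_induction with
  | mem v hv =>
    obtain ⟨s, hs, rfl⟩ := hv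
    exact ⟨1, fun _ => s, fun _ => hs, by simp⟩
  | zero => exact ⟨0, Fin.elim0, (·.elim0), by simp [Prod.zero_eq_mk]⟩
  | add _ _ _ _ hv hw =>
    obtain ⟨k, x, hx, rfl⟩ := hv
    obtain ⟨l, y, hy, rfl⟩ := hw
    refine ⟨k + l, Fin.append x y, Fin.addCases (by simpa using hx) (by simpa using hy), ?_⟩
    simp [Fin.sum_univ_add]
  | smul c _ _ hv =>
    obtain ⟨k, x, hx, rfl⟩ := hv
    obtain rfl | rfl : c = 0 ∨ c = 1 := ZMod.eq_zero_or_eq_one c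
    · exact ⟨0, Fin.elim0, (·.elim0), by simp [Prod.zero_eq_mk]⟩
    · exact ⟨k, x, hx, one_smul _ _⟩

theorem exists_linearMap_eq_one_of_odd_sum_ne_zero {S : Set M}
    (hS : ∀ k, Odd k → ∀ x : Fin k → M, (∀ i, x i ∈ S) → ∑ i, x i ≠ 0) :
    ∃ φ : M →ₗ[ZMod 2] ZMod 2, ∀ s ∈ S, φ s = 1 := by
  set W := Submodule.span (ZMod 2) ((fun s => (s, (1 : ZMod 2))) '' S)
  have h01 : ((0 : M), (1 : ZMod 2)) ∉ W := by
    intro h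
    obtain ⟨k, x, hx, hsum⟩ := exists_family_of_mem_span_prod_one h
    simp only [Prod.mk.injEq] at hsum
    exact hS k (ZMod.natCast_eq_one_iff_odd.1 hsum.2.symm) x hx hsum.1.symm
  obtain ⟨ψ, hψW, hψ01⟩ := LinearMap.exists_extend_of_notMem (0 : W →ₗ[ZMod 2] ZMod 2) h01 1
  refine ⟨ψ.comp (LinearMap.inl (ZMod 2) M (ZMod 2)), fun s hs => ?_⟩
  have hs1 : ψ (s, 1) = 0 := by
    simpa using LinearMap.congr_fun hψW ⟨(s, 1), Submodule.subset_span ⟨s, hs, rfl⟩⟩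
  calc ψ.comp (LinearMap.inl (ZMod 2) M (ZMod 2)) s = ψ ((s, 1) - (0, 1)) := by simp
    _ = 1 := by rw [map_sub, hs1, hψ01, zero_sub, CharTwo.neg_eq]

end OddSums

theorem dotp_sum {n : ℕ} {ι : Type*} (α : V n) (s : Finset ι) (x : ι → V n) :
    dotp α (∑ i ∈ s, x i) = ∑ i ∈ s, dotp α (x i) :=
  dotProduct_sum α s x

theorem dotp_zero {n : ℕ} (α : V n) : dotp α 0 = 0 :=
  dotProduct_zero α

theorem exists_dotp_eq_of_linearMap {n : ℕ} (φ : V n →ₗ[ZMod 2] ZMod 2) :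
    ∃ α : V n, ∀ x, φ x = dotp α x :=
  ⟨fun i => φ fun j => if i = j then 1 else 0, fun x => by
    rw [LinearMap.pi_apply_eq_sum_univ, dotp]
    simp only [smul_eq_mul, mul_comm]⟩

theorem ocf_iff_exists_dotp_eq_one {n : ℕ} {g : V n → ℝ} :
    OCF g ↔ ∃ α : V n, ∀ x, g x = 1 → dotp α x = 1 := by
  constructor
  · intro hg
    obtain ⟨φ, hφ⟩ := exists_linearMap_eq_one_of_odd_sum_ne_zero (S := {x | g x = 1})
      fun k hk x hx hsum => hg k hk ⟨x, hx, hsum⟩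
    obtain ⟨α, hα⟩ := exists_dotp_eq_of_linearMap φ
    exact ⟨α, fun x hx => (hα x).symm.trans (hφ x hx)⟩
  · rintro ⟨α, hα⟩ k hk ⟨x, hx, hsum⟩
    have hk1 : dotp α (∑ i, x i) = 1 := by
      rw [dotp_sum]
      simp [fun i => hα _ (hx i), ZMod.natCast_eq_one_iff_odd.2 hk]
    rw [hsum, dotp_zero] at hk1
    exact zero_ne_one hk1

theorem fhat_zero_add_fhat {n : ℕ} (f : V n → ℝ) (α : V n) :
    fhat f 0 + fhat f α = 2 * (∑ x with dotp α x = 0, f x) / 2 ^ n := by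
  simp only [fhat, ← add_div, ← sum_add_distrib, sum_filter, mul_sum]
  congr 1
  refine sum_congr rfl fun x _ => ?_
  rw [show dotp 0 x = 0 from zero_dotProduct x]
  obtain h | h : dotp α x = 0 ∨ dotp α x = 1 := ZMod.eq_zero_or_eq_one _
  · simp [h, two_mul]
  · simp [h, show (1 : ZMod 2).val = 1 from rfl]

theorem IsBool.sum_eq_card {n : ℕ} {f : V n → ℝ} (hf : IsBool f) (s : Finset (V n)) :
    ∑ x ∈ s, f x = #{x ∈ s | f x = 1} := by
  rw [card_filter, Nat.cast_sum]
  refine sum_congr rfl fun x _ => ?_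
  rcases hf x with h | h <;> simp [h]

theorem half_fhat_zero_add_fhat {n : ℕ} {f : V n → ℝ} (hf : IsBool f) (α : V n) :
    1 / 2 * (fhat f 0 + fhat f α) = #{x | dotp α x = 0 ∧ f x = 1} / 2 ^ n := by
  rw [fhat_zero_add_fhat, hf.sum_eq_card, filter_filter]
  ring

noncomputable def restrictDotpEqOne {n : ℕ} (f : V n → ℝ) (α : V n) : V n → ℝ :=
  fun x => if dotp α x = 1 then f x else 0

theorem IsBool.restrictDotpEqOne {n : ℕ} {f : V n → ℝ} (hf : IsBool f) (α : V n) :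
    IsBool (restrictDotpEqOne f α) := fun x => by
  unfold _root_.restrictDotpEqOne
  split_ifs
  exacts [hf x, Or.inl rfl]

theorem ocf_restrictDotpEqOne {n : ℕ} (f : V n → ℝ) (α : V n) :
    OCF (restrictDotpEqOne f α) :=
  ocf_iff_exists_dotp_eq_one.2 ⟨α, fun x hx => by
    by_contra h
    simp [restrictDotpEqOne, h] at hx⟩

theorem card_ne_restrictDotpEqOne {n : ℕ} {f : V n → ℝ} (hf : IsBool f) (α : V n) :
    #{x | f x ≠ restrictDotpEqOne f α x} = #{x | dotp α x = 0 ∧ f x = 1} := by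
  congr 1
  ext x
  obtain h | h : dotp α x = 0 ∨ dotp α x = 1 := ZMod.eq_zero_or_eq_one _
  · rcases hf x with hx | hx <;> simp [restrictDotpEqOne, h, hx]
  · simp [restrictDotpEqOne, h]

theorem card_le_card_ne_of_dotp_eq_one {n : ℕ} {f g : V n → ℝ} (hg : IsBool g) {α : V n}
    (hα : ∀ x, g x = 1 → dotp α x = 1) :
    #{x | dotp α x = 0 ∧ f x = 1} ≤ #{x | f x ≠ g x} := by
  refine card_le_card fun x => ?_
  simp only [mem_filter, mem_univ, true_and]
  rintro ⟨hx0, hfx⟩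
  rcases hg x with hgx | hgx
  · rw [hfx, hgx]; exact one_ne_zero
  · exact (one_ne_zero ((hα x hgx).symm.trans hx0)).elim

theorem stmt5 {n : ℕ} (f : V n → ℝ) (hf : IsBool f) :
    sInf {d : ℝ | ∃ g : V n → ℝ, IsBool g ∧ OCF g ∧
        d = ((Finset.univ.filter fun x => f x ≠ g x).card : ℝ) / 2 ^ n} =
      (1 / 2) * (fhat f 0 + ⨅ α : V n, fhat f α) := by
  obtain ⟨α₀, hα₀⟩ := Finite.exists_min (fhat f)
  have hinf : ⨅ α, fhat f α = fhat f α₀ :=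
    le_antisymm (ciInf_le (Finite.bddBelow_range _) α₀) (le_ciInf hα₀)
  rw [hinf, half_fhat_zero_add_fhat hf]
  refine IsLeast.csInf_eq ⟨⟨restrictDotpEqOne f α₀, hf.restrictDotpEqOne α₀,
    ocf_restrictDotpEqOne f α₀, by rw [card_ne_restrictDotpEqOne hf]⟩, ?_⟩
  rintro _ ⟨g, hg, hocf, rfl⟩
  obtain ⟨α, hα⟩ := ocf_iff_exists_dotp_eq_one.1 hocf
  calc _ = 1 / 2 * (fhat f 0 + fhat f α₀) := (half_fhat_zero_add_fhat hf α₀).symm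
    _ ≤ 1 / 2 * (fhat f 0 + fhat f α) := by gcongr; exact hα₀ α
    _ = _ := half_fhat_zero_add_fhat hf α
    _ ≤ _ := div_le_div_of_nonneg_right
      (Nat.cast_le.2 (card_le_card_ne_of_dotp_eq_one hg hα)) (by positivity)
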